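/- Let (V, adj) be a finite strongly connected directed graph with root r, let g : V with g ≠ r, and let k ≥ 1 be a natural number. Form the directed graph G' obtained by replacing g with a directed chain g₁ → g₂ → ⋯ → g_k: the vertex type of G' is {v : V // v ≠ g} ⊕ Fin k; between old vertices u, w ≠ g there is an edge iff adj u w; for each old vertex u ≠ g with adj u g there is an edge from u to g₁; there is an edge from gᵢ to gᵢ₊₁ for each 1 ≤ i < k; and for each old vertex w ≠ g with adj g w there is an edge from g_k to w. Then the distance in G' from r to g_k equals d(r, g) + (k − 1). (For k = 2 this gives d_{G'}(root, G₂) = Γ + 1 when d(r, g) = Γ, and for k = D + 1 it gives d_{G'}(root, G'_{D+1}) = t₀ + D when d(r, g) = t₀, as used in the proof that any Wake Up and Report protocol runs for time greater than max(Γ, Γ').) -/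
import Mathlib


/-- `IsWalk adj a b n f` says that `f 0 = a, f 1, …, f n = b` is a walk of length `n`
from `a` to `b` in the directed graph with adjacency relation `adj`. -/
def IsWalk {V : Type*} (adj : V → V → Prop) (a b : V) (n : ℕ) (f : ℕ → V) : Prop :=
  f 0 = a ∧ f n = b ∧ ∀ i < n, adj (f i) (f (i + 1))

/-- The distance from `a` to `b`: the minimum length of a walk from `a` to `b`. -/
noncomputable def gdist {V : Type*} (adj : V → V → Prop) (a b : V) : ℕ :=
  sInf {n | ∃ f : ℕ → V, IsWalk adj a b n f}

/-- The adjacency relation of the graph `G'` obtained from `(V, adj)` by replacing the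
vertex `g` with a directed chain `g₁ → g₂ → ⋯ → g_k` (the chain vertices are
`Sum.inr 0, …, Sum.inr (k-1)`): edges between old vertices are as in `adj`, edges
formerly into `g` now enter `g₁`, the chain edges go `gᵢ → gᵢ₊₁`, and edges formerly
out of `g` now leave `g_k`. -/
def chainAdj {V : Type*} (adj : V → V → Prop) (g : V) (k : ℕ) :
    ({v : V // v ≠ g} ⊕ Fin k) → ({v : V // v ≠ g} ⊕ Fin k) → Prop
  | Sum.inl u, Sum.inl w => adj u.1 w.1
  | Sum.inl u, Sum.inr i => adj u.1 g ∧ (i : ℕ) = 0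
  | Sum.inr i, Sum.inr j => (j : ℕ) = (i : ℕ) + 1
  | Sum.inr i, Sum.inl w => adj g w.1 ∧ (i : ℕ) = k - 1

/-- Replacing the vertex `g ≠ r` by a directed chain of `k ≥ 1` processors, the
distance in the new graph `G'` from the root `r` to the last chain vertex `g_k`
equals `d(r, g) + (k - 1)`. -/
theorem dist_to_chain_end {V : Type*} [Fintype V] [Nonempty V]
    (adj : V → V → Prop)
    (hconn : ∀ a b : V, ∃ (n : ℕ) (f : ℕ → V), IsWalk adj a b n f)
    (r g : V) (hgr : g ≠ r) (k : ℕ) (hk : 1 ≤ k) :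
    gdist (chainAdj adj g k)
        (Sum.inl ⟨r, Ne.symm hgr⟩)
        (Sum.inr ⟨k - 1, by omega⟩) =
      gdist adj r g + (k - 1) := by
  classical
  set adj' := chainAdj adj g k with hadj'
  set rt : {v : V // v ≠ g} ⊕ Fin k := Sum.inl ⟨r, Ne.symm hgr⟩ with hrt
  set en : {v : V // v ≠ g} ⊕ Fin k := Sum.inr ⟨k - 1, by omega⟩ with hen
  set n := gdist adj r g with hn
  have hne : {m | ∃ f : ℕ → V, IsWalk adj r g m f}.Nonempty := by
    obtain ⟨m, f, hf⟩ := hconn r g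
    exact ⟨m, f, hf⟩
  obtain ⟨f, hf0, hfn, hfe⟩ : ∃ f, IsWalk adj r g n f := Nat.sInf_mem hne
  have hng : ∀ i, i < n → f i ≠ g := by
    intro i hi hgi
    have hmem : i ∈ {m | ∃ f : ℕ → V, IsWalk adj r g m f} :=
      ⟨f, hf0, hgi, fun j hj => hfe j (hj.trans hi)⟩
    have h2 : n ≤ i := Nat.sInf_le hmem
    omega
  have hn1 : 1 ≤ n := by
    by_contra h
    have h0 : n = 0 := by omega
    rw [h0, hf0] at hfn
    exact hgr hfn.symm
  -- upper bound: construct a walk of length n + (k-1) in G'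
  set f' : ℕ → ({v : V // v ≠ g} ⊕ Fin k) := fun i =>
    if h : i < n then Sum.inl ⟨f i, hng i h⟩
    else Sum.inr ⟨min (i - n) (k - 1), by omega⟩ with hf'
  have hwalk' : IsWalk adj' rt en (n + (k - 1)) f' := by
    refine ⟨?_, ?_, ?_⟩
    · show (if h : 0 < n then Sum.inl ⟨f 0, hng 0 h⟩ else
        Sum.inr ⟨min (0 - n) (k - 1), by omega⟩) = rt
      rw [dif_pos (show 0 < n by omega), hrt]
      exact congrArg Sum.inl (Subtype.ext hf0)
    · show f' (n + (k - 1)) = en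
      simp only [hf', hen]
      rw [dif_neg (by omega)]
      exact congrArg Sum.inr (Fin.ext (show min (n + (k - 1) - n) (k - 1) = k - 1 by omega))
    · intro i hi
      by_cases h1 : i + 1 < n
      · have h0 : i < n := by omega
        simp only [hf', dif_pos h1, dif_pos h0]
        exact hfe i h0
      · by_cases h0 : i < n
        · have hi1 : i + 1 = n := by omega
          simp only [hf', dif_pos h0, dif_neg (show ¬ i + 1 < n by omega)]
          have hadj : adj (f i) g := by
            have := hfe i h0
            rwa [hi1, hfn] at this
          exact ⟨hadj, show min (i + 1 - n) (k - 1) = 0 by omega⟩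
        · simp only [hf', dif_neg h0, dif_neg (show ¬ i + 1 < n by omega)]
          show min (i + 1 - n) (k - 1) = min (i - n) (k - 1) + 1
          omega
  have hub : gdist adj' rt en ≤ n + (k - 1) :=
    Nat.sInf_le ⟨f', hwalk'⟩
  -- lower bound
  have hne' : {m | ∃ F : ℕ → _, IsWalk adj' rt en m F}.Nonempty := ⟨n + (k - 1), f', hwalk'⟩
  obtain ⟨F, hF0, hFm, hFe⟩ : ∃ F, IsWalk adj' rt en (gdist adj' rt en) F :=
    Nat.sInf_mem hne'
  set m := gdist adj' rt en with hm
  have hex : ∃ s, ∃ j : Fin k, F s = Sum.inr j := ⟨m, _, hFm⟩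
  set t := Nat.find hex with ht
  obtain ⟨j₀, hj₀⟩ : ∃ j : Fin k, F t = Sum.inr j := Nat.find_spec hex
  have hlt : ∀ s, s < t → ∀ j : Fin k, F s ≠ Sum.inr j := by
    intro s hs j hj
    exact Nat.find_min hex hs ⟨j, hj⟩
  have ht0 : 0 < t := by
    rcases Nat.eq_zero_or_pos t with h | h
    · rw [h, hF0] at hj₀; exact absurd hj₀ (by simp [hrt])
    · exact h
  have htm : t ≤ m := by
    by_contra h
    exact hlt m (by omega) _ hFm
  -- the projection walk in G from r to g of length t
  have hinl : ∀ s, s < t → ∃ u : {v : V // v ≠ g}, F s = Sum.inl u := by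
    intro s hs
    cases hFs : F s with
    | inl u => exact ⟨u, rfl⟩
    | inr j => exact absurd hFs (hlt s hs j)
  have hwalkG : IsWalk adj r g t
      (fun s => Sum.elim Subtype.val (fun _ => g) (F s)) := by
    refine ⟨?_, ?_, ?_⟩
    · show Sum.elim Subtype.val (fun _ => g) (F 0) = r
      rw [hF0, hrt]
      rfl
    · show Sum.elim Subtype.val (fun _ => g) (F t) = g
      rw [hj₀]
      rfl
    · intro s hs
      obtain ⟨u, hu⟩ := hinl s hs
      have hedge : adj' (F s) (F (s + 1)) := hFe s (by omega)
      cases hFs1 : F (s + 1) with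
      | inl w =>
        rw [hu, hFs1] at hedge
        have hedge' : adj u.1 w.1 := hedge
        simp only [hu, hFs1, Sum.elim_inl]
        exact hedge'
      | inr j =>
        rw [hu, hFs1] at hedge
        have hedge' : adj u.1 g ∧ (j : ℕ) = 0 := hedge
        simp only [hu, hFs1, Sum.elim_inl, Sum.elim_inr]
        exact hedge'.1
  have hnt : n ≤ t := Nat.sInf_le ⟨_, hwalkG⟩
  -- chain index grows at most one per step from time t
  have hchain : ∀ s, s ≤ m → ∀ j : Fin k, F s = Sum.inr j → (j : ℕ) ≤ s - t := by
    intro s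
    induction s with
    | zero =>
      intro _ j hj
      rw [hF0] at hj
      exact absurd hj (by simp [hrt])
    | succ s ih =>
      intro hsm j hj
      have hedge : adj' (F s) (F (s + 1)) := hFe s (by omega)
      cases hFs : F s with
      | inl u =>
        rw [hFs, hj] at hedge
        have hedge' : adj u.1 g ∧ (j : ℕ) = 0 := hedge
        omega
      | inr i =>
        have hst : t ≤ s := by
          by_contra h
          exact hlt s (by omega) i hFs
        have hih := ih (by omega) i hFs
        rw [hFs, hj] at hedge
        have hedge' : (j : ℕ) = (i : ℕ) + 1 := hedge
        omega
  have hk1 : (k : ℕ) - 1 ≤ m - t := hchain m le_rfl _ hFm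
  have : n + (k - 1) ≤ m := by omega
  omega
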